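/- Let X be a Hilbert space, (e^{tA}) a strongly continuous unitary group on X with generator A, and C ∈ 𝓛(X) satisfying the observability inequality ‖W0‖² ≤ K² ∫₀ᵀ ‖C e^{tA} W0‖² dt. Let Π be the orthogonal projection of L²([0,T];X) onto the range of the observation map of free solutions. Then for every H ∈ L¹([0,T]; X) and every G ∈ L²([0,T]; X), there exists a unique mild solution W ∈ C⁰([0,T]; X) of ∂ₜW = AW + H (i.e. W(t) = e^{tA} W(0) + ∫₀ᵗ e^{(t-s)A} H(s) ds) satisfying Π(C W) = Π G. -/

import Mathlib

open MeasureTheory Set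
open scoped RealInnerProductSpace

/-!
Put `D t = ∫₀ᵗ U (t - s) H(s) ds`; it is continuous on `[0, T]` because
`D t = U t (∫₀ᵗ U (-s) H(s) ds)`. The mild solutions are then exactly `t ↦ U t W₀ + D t`, and
for such a solution the observation condition reads `B W₀ = L`, where
`B v w = ∫₀ᵀ ⟪C U t v, C U t w⟫ dt` is the observability Gramian and
`L v = ∫₀ᵀ ⟪G t - C (D t), C U t v⟫ dt`. The observability inequality says exactly that `B` is
coercive, so by Lax–Milgram there is exactly one such `W₀`.
-/

section JointContinuity

variable {α E F : Type*} [TopologicalSpace α] [SeminormedAddCommGroup E] [NormedSpace ℝ E]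
  [SeminormedAddCommGroup F] [NormedSpace ℝ F] {U : α → E →L[ℝ] F} {M : ℝ}

theorem continuous_uncurry_of_norm_apply_le (hU : ∀ x, Continuous fun t => U t x)
    (hM : ∀ t x, ‖U t x‖ ≤ M * ‖x‖) : Continuous fun p : α × E => U p.1 p.2 := by
  rw [continuous_iff_continuousAt]
  rintro ⟨t₀, x₀⟩
  rw [ContinuousAt, tendsto_iff_dist_tendsto_zero]
  have hdist : ∀ p : α × E,
      dist (U p.1 p.2) (U t₀ x₀) ≤ M * dist p.2 x₀ + dist (U p.1 x₀) (U t₀ x₀) := fun p =>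
    calc dist (U p.1 p.2) (U t₀ x₀)
        ≤ dist (U p.1 p.2) (U p.1 x₀) + dist (U p.1 x₀) (U t₀ x₀) := dist_triangle _ _ _
      _ ≤ M * dist p.2 x₀ + dist (U p.1 x₀) (U t₀ x₀) := by
        rw [dist_eq_norm, ← map_sub, dist_eq_norm p.2]
        gcongr
        exact hM _ _
  have hcont : Continuous fun p : α × E => M * dist p.2 x₀ + dist (U p.1 x₀) (U t₀ x₀) :=
    (continuous_const.mul (continuous_snd.dist continuous_const)).add
      (((hU x₀).comp continuous_fst).dist continuous_const)
  have hlim := hcont.tendsto (t₀, x₀)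
  simp only [dist_self, mul_zero, add_zero] at hlim
  exact squeeze_zero (fun _ => dist_nonneg) hdist hlim

end JointContinuity

section Duhamel

variable {X : Type*} [NormedAddCommGroup X] [NormedSpace ℝ X]
  {U : ℝ → X →L[ℝ] X} {M : ℝ} {H : ℝ → X}

theorem integrableOn_apply_neg (hU : ∀ x, Continuous fun t => U t x)
    (hM : ∀ t x, ‖U t x‖ ≤ M * ‖x‖) {s : Set ℝ} (hH : IntegrableOn H s) :
    IntegrableOn (fun r => U (-r) (H r)) s := by
  refine Integrable.mono' (hH.norm.const_mul M) ?_ (ae_of_all _ fun r => hM _ _)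
  exact (continuous_uncurry_of_norm_apply_le hU hM).comp_aestronglyMeasurable
    (continuous_neg.aestronglyMeasurable.prodMk hH.aestronglyMeasurable)

theorem integral_apply_sub_eq_apply_integral [CompleteSpace X]
    (hUgrp : ∀ s t, U (s + t) = (U s).comp (U t))
    {a b : ℝ} (t : ℝ) (hH : IntervalIntegrable (fun r => U (-r) (H r)) volume a b) :
    ∫ r in a..b, U (t - r) (H r) = U t (∫ r in a..b, U (-r) (H r)) := by
  simp_rw [sub_eq_add_neg, hUgrp]
  exact (U t).intervalIntegral_comp_comm hH

theorem continuousOn_integral_apply_sub [CompleteSpace X]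
    (hUgrp : ∀ s t, U (s + t) = (U s).comp (U t))
    (hU : ∀ x, Continuous fun t => U t x) (hM : ∀ t x, ‖U t x‖ ≤ M * ‖x‖) {a b : ℝ}
    (hH : IntegrableOn H (uIcc a b)) :
    ContinuousOn (fun t => ∫ r in a..t, U (t - r) (H r)) (uIcc a b) := by
  have hF := integrableOn_apply_neg hU hM hH
  have hprim := intervalIntegral.continuousOn_primitive_interval hF
  refine ((continuous_uncurry_of_norm_apply_le hU hM).comp_continuousOn
    (continuousOn_id.prodMk hprim)).congr fun t ht => ?_
  refine integral_apply_sub_eq_apply_integral hUgrp t (hF.mono_set ?_).intervalIntegrable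
  exact uIcc_subset_uIcc_left ht

end Duhamel

section ObservationForms

variable {X Y : Type*} [NormedAddCommGroup X] [NormedSpace ℝ X]
  [NormedAddCommGroup Y] [InnerProductSpace ℝ Y] {A : ℝ → X →L[ℝ] Y} {M a b : ℝ}

theorem intervalIntegrable_inner_apply (hA : ∀ x, Continuous fun t => A t x)
    (hM : ∀ t x, ‖A t x‖ ≤ M * ‖x‖) {ρ : ℝ → Y} (hρ : IntervalIntegrable ρ volume a b) (v : X) :
    IntervalIntegrable (fun t => ⟪ρ t, A t v⟫) volume a b := by
  refine (hρ.norm.mul_const (M * ‖v‖)).mono_fun'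
    (hρ.def'.aestronglyMeasurable.inner (hA v).aestronglyMeasurable) (ae_of_all _ fun t => ?_)
  calc ‖⟪ρ t, A t v⟫‖ ≤ ‖ρ t‖ * ‖A t v‖ := norm_inner_le_norm _ _
    _ ≤ ‖ρ t‖ * (M * ‖v‖) := by gcongr; exact hM _ _

theorem exists_continuousLinearMap_eq_integral_inner (hA : ∀ x, Continuous fun t => A t x)
    (hM : ∀ t x, ‖A t x‖ ≤ M * ‖x‖) {ρ : ℝ → Y} (hρ : IntervalIntegrable ρ volume a b) :
    ∃ L : X →L[ℝ] ℝ, ∀ v, L v = ∫ t in a..b, ⟪ρ t, A t v⟫ := by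
  have hint := intervalIntegrable_inner_apply hA hM hρ
  let ℓ : X →ₗ[ℝ] ℝ :=
    { toFun v := ∫ t in a..b, ⟪ρ t, A t v⟫
      map_add' v w := by
        simp only [map_add, inner_add_right]
        exact intervalIntegral.integral_add (hint v) (hint w)
      map_smul' c v := by
        simp only [map_smul, real_inner_smul_right, intervalIntegral.integral_const_mul,
          smul_eq_mul, RingHom.id_apply] }
  refine ⟨ℓ.mkContinuous (|∫ t in a..b, ‖ρ t‖| * |M|) fun v => ?_, fun v => rfl⟩
  have hle := intervalIntegral.norm_integral_le_abs_of_norm_le (f := fun t => ⟪ρ t, A t v⟫)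
    (g := fun t => ‖ρ t‖ * (M * ‖v‖))
    (ae_of_all _ fun t => (norm_inner_le_norm _ _).trans
      (mul_le_mul_of_nonneg_left (hM t v) (norm_nonneg _)))
    (hρ.norm.mul_const _)
  rw [intervalIntegral.integral_mul_const, abs_mul, abs_mul, abs_norm, ← mul_assoc] at hle
  exact hle

theorem exists_bilin_eq_integral_inner (hA : ∀ x, Continuous fun t => A t x)
    (hM : ∀ t x, ‖A t x‖ ≤ M * ‖x‖) :
    ∃ B : X →L[ℝ] X →L[ℝ] ℝ, ∀ v w, B v w = ∫ t in a..b, ⟪A t v, A t w⟫ := by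
  choose L hL using fun v =>
    exists_continuousLinearMap_eq_integral_inner hA hM ((hA v).intervalIntegrable a b)
  have hint := fun v => intervalIntegrable_inner_apply hA hM ((hA v).intervalIntegrable a b)
  let ℓ : X →ₗ[ℝ] X →L[ℝ] ℝ :=
    { toFun := L
      map_add' v v' := by
        ext w
        simp only [hL, add_apply, map_add, inner_add_left]
        exact intervalIntegral.integral_add (hint v w) (hint v' w)
      map_smul' c v := by
        ext w
        simp only [hL, smul_apply, map_smul, real_inner_smul_left,
          intervalIntegral.integral_const_mul, smul_eq_mul, RingHom.id_apply] }
  refine ⟨ℓ.mkContinuous (M ^ 2 * |b - a|) fun v => ?_, fun v w => hL v w⟩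
  refine ContinuousLinearMap.opNorm_le_bound _ (by positivity) fun w => ?_
  have hMv : 0 ≤ M * ‖v‖ := (norm_nonneg _).trans (hM 0 v)
  have hle := intervalIntegral.norm_integral_le_of_norm_le_const (a := a) (b := b)
    (f := fun t => ⟪A t v, A t w⟫) (C := M * ‖v‖ * (M * ‖w‖)) fun t _ =>
    (norm_inner_le_norm _ _).trans (mul_le_mul (hM t v) (hM t w) (norm_nonneg _) hMv)
  calc ‖L v w‖ ≤ M * ‖v‖ * (M * ‖w‖) * |b - a| := by rw [hL]; exact hle
    _ = M ^ 2 * |b - a| * ‖v‖ * ‖w‖ := by ring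

end ObservationForms

theorem isCoercive_of_sq_norm_le_integral {X Y : Type*} [NormedAddCommGroup X] [NormedSpace ℝ X]
    [NormedAddCommGroup Y] [InnerProductSpace ℝ Y] {A : ℝ → X →L[ℝ] Y} {a b K : ℝ}
    {B : X →L[ℝ] X →L[ℝ] ℝ} (hB : ∀ v w, B v w = ∫ t in a..b, ⟪A t v, A t w⟫) (hK : 0 < K)
    (hobs : ∀ v, ‖v‖ ^ 2 ≤ K ^ 2 * ∫ t in a..b, ‖A t v‖ ^ 2) : IsCoercive B := by
  refine ⟨(K ^ 2)⁻¹, by positivity, fun v => ?_⟩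
  simp only [hB, real_inner_self_eq_norm_sq]
  rw [mul_assoc, ← sq, inv_mul_le_iff₀ (by positivity)]
  exact hobs v

theorem IsCoercive.existsUnique_apply_eq {V : Type*} [NormedAddCommGroup V]
    [InnerProductSpace ℝ V] [CompleteSpace V] {B : V →L[ℝ] V →L[ℝ] ℝ} (hB : IsCoercive B)
    (L : V →L[ℝ] ℝ) : ∃! u, B u = L := by
  have hfactor : ⇑B = InnerProductSpace.toDual ℝ V ∘ hB.continuousLinearEquivOfBilin := by
    ext u w
    simp [InnerProductSpace.toDual_apply_apply]
  rw [hfactor]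
  exact ((InnerProductSpace.toDual ℝ V).bijective.comp
    hB.continuousLinearEquivOfBilin.bijective).existsUnique L

theorem integral_inner_sub_apply_eq {X Y : Type*} [NormedAddCommGroup X] [NormedSpace ℝ X]
    [NormedAddCommGroup Y] [InnerProductSpace ℝ Y] {A : ℝ → X →L[ℝ] Y} {M a b : ℝ}
    (hA : ∀ x, Continuous fun t => A t x) (hM : ∀ t x, ‖A t x‖ ≤ M * ‖x‖)
    {B : X →L[ℝ] X →L[ℝ] ℝ} (hB : ∀ v w, B v w = ∫ t in a..b, ⟪A t v, A t w⟫)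
    {ρ : ℝ → Y} (hρ : IntervalIntegrable ρ volume a b)
    {L : X →L[ℝ] ℝ} (hL : ∀ v, L v = ∫ t in a..b, ⟪ρ t, A t v⟫)
    {f : ℝ → Y} {u : X} (hf : ∀ t ∈ uIcc a b, f t = A t u - ρ t) (v : X) :
    ∫ t in a..b, ⟪f t, A t v⟫ = B u v - L v := by
  rw [hB, hL, ← intervalIntegral.integral_sub
    (intervalIntegrable_inner_apply hA hM ((hA u).intervalIntegrable a b) v)
    (intervalIntegrable_inner_apply hA hM hρ v)]
  refine intervalIntegral.integral_congr fun t ht => ?_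
  simp only [hf t ht, inner_sub_left]

/-- Duhamel formula/observation problem: under the observability
inequality for the unitary group `U t = e^{tA}` and `C ∈ 𝓛(X)`, for every
`H ∈ L¹([0,T];X)` and `G ∈ L²([0,T];X)` there exists a unique mild solution
`W ∈ C⁰([0,T];X)` of `∂ₜW = AW + H`, i.e.
`W t = e^{tA} W(0) + ∫₀ᵗ e^{(t-s)A} H(s) ds`, satisfying `Proj (C W) = Proj G`.
The condition `Proj (C W) = Proj G`, with `Proj` the orthogonal projection of
`L²([0,T];X)` onto the closed range of the observation map of free solutions, is
expressed equivalently by the orthogonality of `t ↦ C(W t) − G t` to all free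
observations `t ↦ C e^{tA} V0`. -/
theorem duhamel_observation_problem
    {X : Type*} [NormedAddCommGroup X] [InnerProductSpace ℝ X] [CompleteSpace X]
    (U : ℝ → X →L[ℝ] X) (hU0 : U 0 = 1)
    (hUgrp : ∀ s t : ℝ, U (s + t) = (U s).comp (U t))
    (hUcont : ∀ x : X, Continuous fun t => U t x)
    (hUunit : ∀ (t : ℝ) (x : X), ‖U t x‖ = ‖x‖)
    (C : X →L[ℝ] X) (T : ℝ) (hT : 0 < T) (K : ℝ) (hK : 0 < K)
    (hobs : ∀ W0 : X, ‖W0‖ ^ 2 ≤ K ^ 2 * ∫ t in (0:ℝ)..T, ‖C (U t W0)‖ ^ 2)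
    (H : ℝ → X) (hH : IntegrableOn H (Icc 0 T) volume)
    (G : ℝ → X) (hG : MemLp G 2 (volume.restrict (Icc 0 T))) :
    ∃ W : ℝ → X,
      (ContinuousOn W (Icc 0 T) ∧
        (∀ t ∈ Icc (0:ℝ) T, W t = U t (W 0) + ∫ s in (0:ℝ)..t, U (t - s) (H s)) ∧
        (∀ V0 : X, ∫ t in (0:ℝ)..T, ⟪C (W t) - G t, C (U t V0)⟫ = 0)) ∧
      ∀ W' : ℝ → X,
        (ContinuousOn W' (Icc 0 T) ∧
          (∀ t ∈ Icc (0:ℝ) T, W' t = U t (W' 0) + ∫ s in (0:ℝ)..t, U (t - s) (H s)) ∧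
          (∀ V0 : X, ∫ t in (0:ℝ)..T, ⟪C (W' t) - G t, C (U t V0)⟫ = 0)) →
        ∀ t ∈ Icc (0:ℝ) T, W' t = W t := by
  have hIcc : uIcc 0 T = Icc 0 T := uIcc_of_le hT.le
  have hUM : ∀ t x, ‖U t x‖ ≤ 1 * ‖x‖ := fun t x => by rw [hUunit, one_mul]
  set A : ℝ → X →L[ℝ] X := fun t => C.comp (U t)
  have hA : ∀ x, Continuous fun t => A t x := fun x => C.continuous.comp (hUcont x)
  have hAM : ∀ t x, ‖A t x‖ ≤ ‖C‖ * ‖x‖ := fun t x => by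
    simpa only [A, ContinuousLinearMap.comp_apply, hUunit] using C.le_opNorm (U t x)
  set D : ℝ → X := fun t => ∫ s in (0:ℝ)..t, U (t - s) (H s)
  have hD : ContinuousOn D (Icc 0 T) := by
    rw [← hIcc] at hH ⊢; exact continuousOn_integral_apply_sub hUgrp hUcont hUM hH
  have hρ : IntervalIntegrable (fun t => G t - C (D t)) volume 0 T := by
    rw [intervalIntegrable_iff_integrableOn_Icc_of_le hT.le]
    exact (hG.integrable one_le_two).sub (C.continuous.comp_continuousOn hD).integrableOn_Icc
  obtain ⟨B, hB⟩ := exists_bilin_eq_integral_inner (a := 0) (b := T) hA hAM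
  obtain ⟨L, hL⟩ := exists_continuousLinearMap_eq_integral_inner hA hAM hρ
  obtain ⟨W0, hW0, hW0_unique⟩ :=
    (isCoercive_of_sq_norm_le_integral hB hK hobs).existsUnique_apply_eq L
  have horth : ∀ W : ℝ → X, (∀ t ∈ Icc (0:ℝ) T, W t = U t (W 0) + D t) → ∀ v,
      ∫ t in (0:ℝ)..T, ⟪C (W t) - G t, C (U t v)⟫ = B (W 0) v - L v := by
    refine fun W hW => integral_inner_sub_apply_eq hA hAM hB hρ hL fun t ht => ?_
    rw [hIcc] at ht
    simp only [A, hW t ht, map_add, ContinuousLinearMap.comp_apply]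
    abel
  have hW0zero : U 0 W0 + D 0 = W0 := by simp [D, hU0]
  refine ⟨fun t => U t W0 + D t,
    ⟨(hUcont W0).continuousOn.add hD, fun t _ => by simp only [hW0zero, D], fun v => ?_⟩, ?_⟩
  · rw [horth _ (fun t _ => by simp only [hW0zero]), hW0zero, hW0, sub_self]
  · rintro W' ⟨-, hW'mild, hW'orth⟩ t ht
    have hW'0 : W' 0 = W0 := hW0_unique _ <| ContinuousLinearMap.ext fun v =>
      sub_eq_zero.mp ((horth W' hW'mild v).symm.trans (hW'orth v))
    rw [hW'mild t ht, hW'0]
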